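/- Well-posedness of the overlapping scheme with fine-flux/coarse-pressure matching: augment the one-dimensional composite finite volume scheme with additional unknowns p_{I+1}^{n,k} (k = 1,…,𝒦) and p_I^{n} (n = 1,…,N₂), interface fluxes u_{I+1/2}^{n,k} = (p_{I+1}^{n,k} − p_I^{n,k})/(x_{I+1} − x_I) and u_{I+1/2}^{n} = (p_{I+1}^{n} − p_I^{n})/(x_{I+1} − x_I), and interface conditions, for every n: u_{I+1/2}^{n,k} = u_{I+1/2}^{n} for all k and δt₂ p_I^{n} = Σ_{k=1}^{𝒦} δt₁ p_I^{n,k}. Then for every choice of sources f_j^{n,k}, f_j^{n} and initial values p_j^0, the resulting finite linear system has exactly one solution (p_j^{n,k} for j ≤ I, p_j^{n} for j > I, p_{I+1}^{n,k}, p_I^{n}). -/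

import Mathlib

/-!
Energy method. Fix a coarse step `n` and suppose all data vanish, including the values of the
previous step. Multiply the fine equations by `δt₁ p_j^{n,k}` and the coarse ones by
`δt₂ p_j^{n}`, then sum by parts in space. The implicit Euler terms are nonnegative, and the
Dirichlet boundaries only contribute terms of the right sign. Because of the two interface
conditions, the two interface terms add up to `-δt₂ (p_{I+1}^n - p_I^n)² / (x_{I+1} - x_I)`,
so every unknown of step `n` vanishes. Induction over `n` then gives uniqueness. The scheme has
exactly one equation per unknown, so it is a square linear system and uniqueness also gives
existence.
-/

open Finset

/-- Cell center `x_j = (x_{j-1/2} + x_{j+1/2})/2`, where `xh j` denotes `x_{j+1/2}`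
(so `xh 0 = x_{1/2}`, …, `xh J = x_{J+1/2}`). -/
noncomputable def xc (xh : ℕ → ℝ) (j : ℕ) : ℝ := (xh (j - 1) + xh j) / 2

/-- Cell width `h_j = x_{j+1/2} − x_{j−1/2}`. -/
noncomputable def hw (xh : ℕ → ℝ) (j : ℕ) : ℝ := xh j - xh (j - 1)

/-- The previous fine-time value `p_j^{n,k−1}`, with the conventions
`p_j^{n,0} = p_j^{n−1,𝒦}` and `p_j^{1,0} = p_j^0`. -/
def prevF (K : ℕ) (p0 : ℕ → ℝ) (p1 : ℕ → ℕ → ℕ → ℝ) (n k j : ℕ) : ℝ :=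
  if k = 1 then (if n = 1 then p0 j else p1 (n - 1) K j) else p1 n (k - 1) j

/-- The previous coarse-time value `p_j^{n−1}`, with the convention `p_j^0 = p_j^0`. -/
def prevC (p0 : ℕ → ℝ) (p2 : ℕ → ℕ → ℝ) (n j : ℕ) : ℝ :=
  if n = 1 then p0 j else p2 (n - 1) j

/-- Fine fluxes `u_{j+1/2}^{n,k}` for face indices `j = 0,…,I` in the overlapping
scheme: `u_{1/2}^{n,k} = p_1^{n,k}/(x_1 − x_{1/2})`,
`u_{j+1/2}^{n,k} = (p_{j+1}^{n,k} − p_j^{n,k})/(x_{j+1} − x_j)` for `1 ≤ j < I`, and the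
interface flux `u_{I+1/2}^{n,k} = (p_{I+1}^{n,k} − p_I^{n,k})/(x_{I+1} − x_I)`, where
`r1 n k` denotes the extra unknown `p_{I+1}^{n,k}`. -/
noncomputable def uF (I : ℕ) (xh : ℕ → ℝ) (p1 : ℕ → ℕ → ℕ → ℝ) (r1 : ℕ → ℕ → ℝ)
    (n k j : ℕ) : ℝ :=
  if j = 0 then p1 n k 1 / (xc xh 1 - xh 0)
  else if j < I then (p1 n k (j + 1) - p1 n k j) / (xc xh (j + 1) - xc xh j)
  else (r1 n k - p1 n k I) / (xc xh (I + 1) - xc xh I)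

/-- Coarse fluxes `u_{j+1/2}^{n}` for face indices `j = I,…,J` in the overlapping
scheme: the interface flux `u_{I+1/2}^{n} = (p_{I+1}^{n} − p_I^{n})/(x_{I+1} − x_I)`
(where `r2 n` denotes the extra unknown `p_I^{n}`),
`u_{j+1/2}^{n} = (p_{j+1}^{n} − p_j^{n})/(x_{j+1} − x_j)` for `I < j < J`, and
`u_{J+1/2}^{n} = −p_J^{n}/(x_{J+1/2} − x_J)`. -/
noncomputable def uC (I J : ℕ) (xh : ℕ → ℝ) (p2 : ℕ → ℕ → ℝ) (r2 : ℕ → ℝ)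
    (n j : ℕ) : ℝ :=
  if j = J then -(p2 n J) / (xh J - xc xh J)
  else if I < j then (p2 n (j + 1) - p2 n j) / (xc xh (j + 1) - xc xh j)
  else (p2 n (I + 1) - r2 n) / (xc xh (I + 1) - xc xh I)

/-- The interior scheme equations of the one-dimensional composite finite volume scheme:
`(h_j/δt₁)(p_j^{n,k} − p_j^{n,k−1}) − (u_{j+1/2}^{n,k} − u_{j−1/2}^{n,k}) = h_j f_j^{n,k}`
for `j = 1,…,I`, `n = 1,…,N₂`, `k = 1,…,𝒦`, and
`(h_j/δt₂)(p_j^{n} − p_j^{n−1}) − (u_{j+1/2}^{n} − u_{j−1/2}^{n}) = h_j f_j^{n}`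
for `j = I+1,…,J`, `n = 1,…,N₂`. -/
def SchemeEqs (J I K N2 : ℕ) (δt1 δt2 : ℝ) (xh : ℕ → ℝ)
    (p0 : ℕ → ℝ) (f1 : ℕ → ℕ → ℕ → ℝ) (f2 : ℕ → ℕ → ℝ)
    (p1 : ℕ → ℕ → ℕ → ℝ) (p2 : ℕ → ℕ → ℝ) (r1 : ℕ → ℕ → ℝ) (r2 : ℕ → ℝ) : Prop :=
  (∀ n ∈ Icc 1 N2, ∀ k ∈ Icc 1 K, ∀ j ∈ Icc 1 I,
      (hw xh j / δt1) * (p1 n k j - prevF K p0 p1 n k j)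
        - (uF I xh p1 r1 n k j - uF I xh p1 r1 n k (j - 1)) = hw xh j * f1 n k j)
  ∧ (∀ n ∈ Icc 1 N2, ∀ j ∈ Icc (I + 1) J,
      (hw xh j / δt2) * (p2 n j - prevC p0 p2 n j)
        - (uC I J xh p2 r2 n j - uC I J xh p2 r2 n (j - 1)) = hw xh j * f2 n j)

/-- Interface conditions of the overlapping scheme with fine-flux/coarse-pressure
matching: `u_{I+1/2}^{n,k} = u_{I+1/2}^{n}` for all `k` and
`δt₂ p_I^{n} = ∑_{k=1}^{𝒦} δt₁ p_I^{n,k}`. -/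
def InterfaceFineFluxOverlap (J I K N2 : ℕ) (δt1 δt2 : ℝ) (xh : ℕ → ℝ)
    (p1 : ℕ → ℕ → ℕ → ℝ) (p2 : ℕ → ℕ → ℝ) (r1 : ℕ → ℕ → ℝ) (r2 : ℕ → ℝ) : Prop :=
  ∀ n ∈ Icc 1 N2,
    (∀ k ∈ Icc 1 K, uF I xh p1 r1 n k I = uC I J xh p2 r2 n I)
    ∧ δt2 * r2 n = ∑ k ∈ Icc 1 K, δt1 * p1 n k I

lemma sum_Icc_sub_mul_eq (u a : ℕ → ℝ) {m M : ℕ} (hmM : m < M) :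
    ∑ j ∈ Icc (m + 1) M, (u j - u (j - 1)) * a j
      = u M * a M - u m * a (m + 1) - ∑ j ∈ Icc (m + 1) (M - 1), u j * (a (j + 1) - a j) := by
  induction M, hmM using Nat.le_induction with
  | base => simp; ring
  | succ M hM ih =>
    obtain ⟨M, rfl⟩ : ∃ M', M = M' + 1 := ⟨M - 1, by omega⟩
    rw [sum_Icc_succ_top (by omega), ih, Nat.add_sub_cancel, Nat.add_sub_cancel,
      sum_Icc_succ_top (by omega)]
    ring

lemma sum_Icc_sub_mul_le (u a : ℕ → ℝ) {m M : ℕ} (hmM : m < M)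
    (hu : ∀ j ∈ Icc (m + 1) (M - 1), 0 ≤ u j * (a (j + 1) - a j)) :
    ∑ j ∈ Icc (m + 1) M, (u j - u (j - 1)) * a j ≤ u M * a M - u m * a (m + 1) := by
  rw [sum_Icc_sub_mul_eq u a hmM]
  linarith [sum_nonneg hu]

lemma two_mul_sum_Icc_sub_mul_self (g : ℕ → ℝ) (K : ℕ) :
    2 * ∑ k ∈ Icc 1 K, (g k - g (k - 1)) * g k
      = g K ^ 2 - g 0 ^ 2 + ∑ k ∈ Icc 1 K, (g k - g (k - 1)) ^ 2 := by
  induction K with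
  | zero => simp
  | succ K ih =>
    rw [sum_Icc_succ_top (by omega), sum_Icc_succ_top (by omega), Nat.add_sub_cancel]
    linear_combination ih

lemma sum_Icc_sub_mul_self_nonneg {g : ℕ → ℝ} (hg : g 0 = 0) (K : ℕ) :
    0 ≤ ∑ k ∈ Icc 1 K, (g k - g (k - 1)) * g k := by
  have := two_mul_sum_Icc_sub_mul_self g K
  have : 0 ≤ ∑ k ∈ Icc 1 K, (g k - g (k - 1)) ^ 2 := sum_nonneg fun _ _ => sq_nonneg _
  nlinarith [sq_nonneg (g K)]

lemma eq_zero_of_sum_Icc_sub_mul_self_eq_zero {g : ℕ → ℝ} (hg : g 0 = 0) {K : ℕ}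
    (h : ∑ k ∈ Icc 1 K, (g k - g (k - 1)) * g k = 0) : ∀ k ≤ K, g k = 0 := by
  have hsq : ∑ k ∈ Icc 1 K, (g k - g (k - 1)) ^ 2 = 0 := by
    have := two_mul_sum_Icc_sub_mul_self g K
    have : 0 ≤ ∑ k ∈ Icc 1 K, (g k - g (k - 1)) ^ 2 := sum_nonneg fun _ _ => sq_nonneg _
    nlinarith [sq_nonneg (g K)]
  have hstep := (sum_eq_zero_iff_of_nonneg fun _ _ => sq_nonneg _).mp hsq
  intro k hk
  induction k with
  | zero => exact hg
  | succ k ih =>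
    have := hstep (k + 1) (mem_Icc.mpr ⟨by omega, hk⟩)
    rw [Nat.add_sub_cancel, ih (by omega)] at this
    simpa using this

section Mesh

variable {J : ℕ} {xh : ℕ → ℝ}

lemma hw_pos (hxh : ∀ j < J, xh j < xh (j + 1)) {j : ℕ} (h1 : 1 ≤ j) (h2 : j ≤ J) :
    0 < hw xh j := by
  obtain ⟨i, rfl⟩ : ∃ i, j = i + 1 := ⟨j - 1, by omega⟩
  simpa [hw] using hxh i (by omega)

lemma xc_one_sub_pos (hxh : ∀ j < J, xh j < xh (j + 1)) (hJ : 0 < J) :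
    0 < xc xh 1 - xh 0 := by
  have := hxh 0 hJ
  simp only [xc]
  linarith

lemma xc_succ_sub_pos (hxh : ∀ j < J, xh j < xh (j + 1)) {j : ℕ} (h1 : 1 ≤ j) (h2 : j < J) :
    0 < xc xh (j + 1) - xc xh j := by
  obtain ⟨i, rfl⟩ : ∃ i, j = i + 1 := ⟨j - 1, by omega⟩
  have := hxh i (by omega)
  have := hxh (i + 1) h2
  simp only [xc, Nat.add_sub_cancel]
  linarith

lemma sub_xc_pos (hxh : ∀ j < J, xh j < xh (j + 1)) (hJ : 0 < J) : 0 < xh J - xc xh J := by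
  obtain ⟨i, rfl⟩ : ∃ i, J = i + 1 := ⟨J - 1, by omega⟩
  have := hxh i (by omega)
  simp only [xc, Nat.add_sub_cancel]
  linarith

end Mesh

section Fluxes

variable {I J : ℕ} {xh : ℕ → ℝ} {p1 : ℕ → ℕ → ℕ → ℝ} {r1 : ℕ → ℕ → ℝ} {p2 : ℕ → ℕ → ℝ}
  {r2 : ℕ → ℝ} {n k : ℕ}

lemma uF_zero : uF I xh p1 r1 n k 0 = p1 n k 1 / (xc xh 1 - xh 0) := by
  simp [uF]

lemma uF_of_lt {j : ℕ} (h0 : j ≠ 0) (hj : j < I) :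
    uF I xh p1 r1 n k j = (p1 n k (j + 1) - p1 n k j) / (xc xh (j + 1) - xc xh j) := by
  simp [uF, h0, hj]

lemma uF_self (hI : I ≠ 0) :
    uF I xh p1 r1 n k I = (r1 n k - p1 n k I) / (xc xh (I + 1) - xc xh I) := by
  simp [uF, hI]

lemma uC_right : uC I J xh p2 r2 n J = -p2 n J / (xh J - xc xh J) := by
  simp [uC]

lemma uC_of_lt {j : ℕ} (hIj : I < j) (hjJ : j ≠ J) :
    uC I J xh p2 r2 n j = (p2 n (j + 1) - p2 n j) / (xc xh (j + 1) - xc xh j) := by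
  simp [uC, hIj, hjJ]

lemma uC_self (hIJ : I ≠ J) :
    uC I J xh p2 r2 n I = (p2 n (I + 1) - r2 n) / (xc xh (I + 1) - xc xh I) := by
  simp [uC, hIJ]

lemma sum_uF_sub_mul_le (hxh : ∀ j < J, xh j < xh (j + 1)) (hI : 0 < I) (hIJ : I < J) :
    ∑ j ∈ Icc 1 I, (uF I xh p1 r1 n k j - uF I xh p1 r1 n k (j - 1)) * p1 n k j
      ≤ uF I xh p1 r1 n k I * p1 n k I := by
  have hle := sum_Icc_sub_mul_le (uF I xh p1 r1 n k) (p1 n k) hI fun j hj => by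
    simp only [mem_Icc] at hj
    rw [uF_of_lt (by omega) (by omega), div_mul_eq_mul_div]
    exact div_nonneg (mul_self_nonneg _) (xc_succ_sub_pos hxh (by omega) (by omega)).le
  have hleft : 0 ≤ uF I xh p1 r1 n k 0 * p1 n k 1 := by
    rw [uF_zero, div_mul_eq_mul_div]
    exact div_nonneg (mul_self_nonneg _) (xc_one_sub_pos hxh (by omega)).le
  rw [zero_add] at hle
  linarith

lemma sum_uC_sub_mul_le (hxh : ∀ j < J, xh j < xh (j + 1)) (hIJ : I < J) :
    ∑ j ∈ Icc (I + 1) J, (uC I J xh p2 r2 n j - uC I J xh p2 r2 n (j - 1)) * p2 n j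
      ≤ -(uC I J xh p2 r2 n I * p2 n (I + 1)) := by
  have hle := sum_Icc_sub_mul_le (uC I J xh p2 r2 n) (p2 n) hIJ fun j hj => by
    simp only [mem_Icc] at hj
    rw [uC_of_lt (by omega) (by omega), div_mul_eq_mul_div]
    exact div_nonneg (mul_self_nonneg _) (xc_succ_sub_pos hxh (by omega) (by omega)).le
  have hright : uC I J xh p2 r2 n J * p2 n J ≤ 0 := by
    rw [uC_right, div_mul_eq_mul_div, neg_mul]
    exact div_nonpos_of_nonpos_of_nonneg (neg_nonpos.mpr (mul_self_nonneg _))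
      (sub_xc_pos hxh (by omega)).le
  linarith

end Fluxes

section Energy

variable {J I K N2 : ℕ} {δt1 δt2 : ℝ} {xh : ℕ → ℝ} {p0 : ℕ → ℝ} {f1 : ℕ → ℕ → ℕ → ℝ}
  {f2 : ℕ → ℕ → ℝ} {p1 : ℕ → ℕ → ℕ → ℝ} {p2 : ℕ → ℕ → ℝ} {r1 : ℕ → ℕ → ℝ} {r2 : ℕ → ℝ}
  {n : ℕ}

lemma fine_energy_le (hxh : ∀ j < J, xh j < xh (j + 1)) (hI : 0 < I) (hIJ : I < J)
    (hδt1 : 0 < δt1) (hS : SchemeEqs J I K N2 δt1 δt2 xh p0 0 f2 p1 p2 r1 r2)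
    (hIF : InterfaceFineFluxOverlap J I K N2 δt1 δt2 xh p1 p2 r1 r2) (hn : n ∈ Icc 1 N2) :
    ∑ j ∈ Icc 1 I, hw xh j * ∑ k ∈ Icc 1 K, (p1 n k j - prevF K p0 p1 n k j) * p1 n k j
      ≤ δt2 * r2 n * uC I J xh p2 r2 n I := by
  have hcell : ∀ k ∈ Icc 1 K, ∀ j ∈ Icc 1 I,
      hw xh j * ((p1 n k j - prevF K p0 p1 n k j) * p1 n k j)
        = δt1 * ((uF I xh p1 r1 n k j - uF I xh p1 r1 n k (j - 1)) * p1 n k j) := by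
    intro k hk j hj
    have h := hS.1 n hn k hk j hj
    simp only [Pi.zero_apply, mul_zero, sub_eq_zero] at h
    rw [← h]
    field_simp
  calc ∑ j ∈ Icc 1 I, hw xh j * ∑ k ∈ Icc 1 K, (p1 n k j - prevF K p0 p1 n k j) * p1 n k j
      = δt1 * ∑ k ∈ Icc 1 K, ∑ j ∈ Icc 1 I,
          (uF I xh p1 r1 n k j - uF I xh p1 r1 n k (j - 1)) * p1 n k j := by
        simp_rw [mul_sum]
        rw [sum_comm]
        exact sum_congr rfl fun k hk => sum_congr rfl fun j hj => hcell k hk j hj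
    _ ≤ δt1 * ∑ k ∈ Icc 1 K, uF I xh p1 r1 n k I * p1 n k I := by
        gcongr with k
        exact sum_uF_sub_mul_le hxh hI hIJ
    _ = δt2 * r2 n * uC I J xh p2 r2 n I := by
        rw [(hIF n hn).2, mul_sum, sum_mul]
        exact sum_congr rfl fun k hk => by rw [(hIF n hn).1 k hk]; ring

lemma coarse_energy_le (hxh : ∀ j < J, xh j < xh (j + 1)) (hIJ : I < J)
    (hδt2 : 0 < δt2) (hS : SchemeEqs J I K N2 δt1 δt2 xh p0 f1 0 p1 p2 r1 r2)
    (hn : n ∈ Icc 1 N2) :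
    ∑ j ∈ Icc (I + 1) J, hw xh j * ((p2 n j - prevC p0 p2 n j) * p2 n j)
      ≤ -(δt2 * p2 n (I + 1) * uC I J xh p2 r2 n I) := by
  have hcell : ∀ j ∈ Icc (I + 1) J, hw xh j * ((p2 n j - prevC p0 p2 n j) * p2 n j)
      = δt2 * ((uC I J xh p2 r2 n j - uC I J xh p2 r2 n (j - 1)) * p2 n j) := by
    intro j hj
    have h := hS.2 n hn j hj
    simp only [Pi.zero_apply, mul_zero, sub_eq_zero] at h
    rw [← h]
    field_simp
  rw [sum_congr rfl hcell, ← mul_sum]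
  nlinarith [sum_uC_sub_mul_le (p2 := p2) (r2 := r2) (n := n) hxh hIJ]

lemma prevF_succ {k : ℕ} (hk : k ≠ 0) (j : ℕ) : prevF K p0 p1 n (k + 1) j = p1 n k j := by
  simp [prevF, hk]

lemma sum_sub_prevF_mul_eq (j : ℕ) :
    ∑ k ∈ Icc 1 K, (p1 n k j - prevF K p0 p1 n k j) * p1 n k j
      = ∑ k ∈ Icc 1 K, (prevF K p0 p1 n (k + 1) j - prevF K p0 p1 n (k - 1 + 1) j)
          * prevF K p0 p1 n (k + 1) j := by
  refine sum_congr rfl fun k hk => ?_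
  rw [mem_Icc] at hk
  rw [prevF_succ (by omega), Nat.sub_add_cancel hk.1]

lemma sum_sub_prevF_mul_nonneg {j : ℕ} (h : prevF K p0 p1 n 1 j = 0) :
    0 ≤ ∑ k ∈ Icc 1 K, (p1 n k j - prevF K p0 p1 n k j) * p1 n k j := by
  rw [sum_sub_prevF_mul_eq]
  exact sum_Icc_sub_mul_self_nonneg (g := fun k => prevF K p0 p1 n (k + 1) j) h K

lemma eq_zero_of_sum_sub_prevF_mul_eq_zero {j : ℕ} (h : prevF K p0 p1 n 1 j = 0)
    (hsum : ∑ k ∈ Icc 1 K, (p1 n k j - prevF K p0 p1 n k j) * p1 n k j = 0) :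
    ∀ k ∈ Icc 1 K, p1 n k j = 0 := by
  rw [sum_sub_prevF_mul_eq] at hsum
  intro k hk
  rw [mem_Icc] at hk
  rw [← prevF_succ (K := K) (p0 := p0) (p1 := p1) (n := n) (by omega)]
  exact eq_zero_of_sum_Icc_sub_mul_self_eq_zero (g := fun k => prevF K p0 p1 n (k + 1) j) h hsum
    k hk.2

lemma level_energy_balance (hxh : ∀ j < J, xh j < xh (j + 1)) (hI : 0 < I) (hIJ : I < J)
    (hδt1 : 0 < δt1) (hδt2 : 0 < δt2) (hS : SchemeEqs J I K N2 δt1 δt2 xh p0 0 0 p1 p2 r1 r2)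
    (hIF : InterfaceFineFluxOverlap J I K N2 δt1 δt2 xh p1 p2 r1 r2) (hn : n ∈ Icc 1 N2) :
    ∑ j ∈ Icc 1 I, hw xh j * ∑ k ∈ Icc 1 K, (p1 n k j - prevF K p0 p1 n k j) * p1 n k j
      + ∑ j ∈ Icc (I + 1) J, hw xh j * ((p2 n j - prevC p0 p2 n j) * p2 n j)
      + δt2 * ((p2 n (I + 1) - r2 n) ^ 2 / (xc xh (I + 1) - xc xh I)) ≤ 0 := by
  have hinterface :
      δt2 * r2 n * uC I J xh p2 r2 n I - δt2 * p2 n (I + 1) * uC I J xh p2 r2 n I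
        = -(δt2 * ((p2 n (I + 1) - r2 n) ^ 2 / (xc xh (I + 1) - xc xh I))) := by
    rw [uC_self hIJ.ne]
    ring
  linarith [fine_energy_le hxh hI hIJ hδt1 hS hIF hn, coarse_energy_le hxh hIJ hδt2 hS hn]

lemma level_eq_zero (hxh : ∀ j < J, xh j < xh (j + 1)) (hI : 0 < I) (hIJ : I < J)
    (hδt1 : 0 < δt1) (hδt2 : 0 < δt2) (hS : SchemeEqs J I K N2 δt1 δt2 xh p0 0 0 p1 p2 r1 r2)
    (hIF : InterfaceFineFluxOverlap J I K N2 δt1 δt2 xh p1 p2 r1 r2) (hn : n ∈ Icc 1 N2)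
    (hprevF : ∀ j ∈ Icc 1 I, prevF K p0 p1 n 1 j = 0)
    (hprevC : ∀ j ∈ Icc (I + 1) J, prevC p0 p2 n j = 0) :
    (∀ k ∈ Icc 1 K, (∀ j ∈ Icc 1 I, p1 n k j = 0) ∧ r1 n k = 0)
      ∧ (∀ j ∈ Icc (I + 1) J, p2 n j = 0) ∧ r2 n = 0 := by
  have hd : 0 < xc xh (I + 1) - xc xh I := xc_succ_sub_pos hxh hI hIJ
  have hfine : ∀ j ∈ Icc 1 I,
      0 ≤ hw xh j * ∑ k ∈ Icc 1 K, (p1 n k j - prevF K p0 p1 n k j) * p1 n k j :=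
    fun j hj => mul_nonneg (hw_pos hxh (mem_Icc.mp hj).1 (by grind)).le
      (sum_sub_prevF_mul_nonneg (hprevF j hj))
  have hcoarse : ∀ j ∈ Icc (I + 1) J,
      0 ≤ hw xh j * ((p2 n j - prevC p0 p2 n j) * p2 n j) := fun j hj => by
    rw [hprevC j hj, sub_zero]
    exact mul_nonneg (hw_pos hxh (by grind) (mem_Icc.mp hj).2).le (mul_self_nonneg _)
  have hjump : 0 ≤ δt2 * ((p2 n (I + 1) - r2 n) ^ 2 / (xc xh (I + 1) - xc xh I)) := by
    positivity
  have hbalance := level_energy_balance hxh hI hIJ hδt1 hδt2 hS hIF hn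
  have hp1 : ∀ k ∈ Icc 1 K, ∀ j ∈ Icc 1 I, p1 n k j = 0 := fun k hk j hj => by
    have := (sum_eq_zero_iff_of_nonneg hfine).mp
      (by linarith [sum_nonneg hfine, sum_nonneg hcoarse]) j hj
    rcases mul_eq_zero.mp this with h | h
    · exact absurd h (hw_pos hxh (mem_Icc.mp hj).1 (by grind)).ne'
    · exact eq_zero_of_sum_sub_prevF_mul_eq_zero (hprevF j hj) h k hk
  have hp2 : ∀ j ∈ Icc (I + 1) J, p2 n j = 0 := fun j hj => by
    have := (sum_eq_zero_iff_of_nonneg hcoarse).mp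
      (by linarith [sum_nonneg hfine, sum_nonneg hcoarse]) j hj
    rw [hprevC j hj, sub_zero] at this
    simpa [(hw_pos hxh (by grind) (mem_Icc.mp hj).2).ne'] using this
  have hjump0 : p2 n (I + 1) = r2 n := by
    have : δt2 * ((p2 n (I + 1) - r2 n) ^ 2 / (xc xh (I + 1) - xc xh I)) = 0 := by
      linarith [sum_nonneg hfine, sum_nonneg hcoarse]
    simpa [hδt2.ne', hd.ne', sub_eq_zero] using this
  have hr2 : r2 n = 0 := hjump0 ▸ hp2 (I + 1) (mem_Icc.mpr ⟨le_rfl, hIJ⟩)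
  refine ⟨fun k hk => ⟨hp1 k hk, ?_⟩, hp2, hr2⟩
  have := (hIF n hn).1 k hk
  rw [uF_self hI.ne', uC_self hIJ.ne, hjump0, sub_self, zero_div, div_eq_zero_iff,
    sub_eq_zero, hp1 k hk I (mem_Icc.mpr ⟨hI, le_rfl⟩)] at this
  exact this.resolve_right hd.ne'

lemma eq_zero_of_homogeneous (hxh : ∀ j < J, xh j < xh (j + 1)) (hI : 0 < I) (hIJ : I < J)
    (hK : 0 < K) (hδt1 : 0 < δt1) (hδt2 : 0 < δt2)
    (hS : SchemeEqs J I K N2 δt1 δt2 xh 0 0 0 p1 p2 r1 r2)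
    (hIF : InterfaceFineFluxOverlap J I K N2 δt1 δt2 xh p1 p2 r1 r2) :
    ∀ n ∈ Icc 1 N2, (∀ k ∈ Icc 1 K, (∀ j ∈ Icc 1 I, p1 n k j = 0) ∧ r1 n k = 0)
      ∧ (∀ j ∈ Icc (I + 1) J, p2 n j = 0) ∧ r2 n = 0 := by
  intro n hn
  obtain ⟨hn1, hnN⟩ := mem_Icc.mp hn
  induction n, hn1 using Nat.le_induction with
  | base =>
    exact level_eq_zero hxh hI hIJ hδt1 hδt2 hS hIF hn (by simp [prevF]) (by simp [prevC])
  | succ n hn1 ih =>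
    have hprev := ih (mem_Icc.mpr ⟨hn1, by omega⟩) (by omega)
    have hn0 : n ≠ 0 := Nat.one_le_iff_ne_zero.mp hn1
    refine level_eq_zero hxh hI hIJ hδt1 hδt2 hS hIF hn (fun j hj => ?_) (fun j hj => ?_)
    · simpa [prevF, hn0] using (hprev.1 K (mem_Icc.mpr ⟨hK, le_rfl⟩)).1 j hj
    · simpa [prevC, hn0] using hprev.2.1 j hj

end Energy

/-- Each index names one unknown and the equation paired with it: `p1 n k j` with the fine
equation, `p2 n j` with the coarse equation, `r1 n k` with the flux matching and `r2 n` with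
the pressure matching. This pairing makes the scheme a square system. -/
abbrev SchemeIndex : Type := (ℕ × ℕ × ℕ) ⊕ (ℕ × ℕ) ⊕ (ℕ × ℕ) ⊕ ℕ

section Residual

variable (J I K N2 : ℕ) (δt1 δt2 : ℝ) (xh : ℕ → ℝ)

def packUnknowns (p1 : ℕ → ℕ → ℕ → ℝ) (p2 : ℕ → ℕ → ℝ) (r1 : ℕ → ℕ → ℝ) (r2 : ℕ → ℝ) :
    SchemeIndex → ℝ
  | .inl (n, k, j) => p1 n k j
  | .inr (.inl (n, j)) => p2 n j
  | .inr (.inr (.inl (n, k))) => r1 n k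
  | .inr (.inr (.inr n)) => r2 n

def fineVal (v : SchemeIndex → ℝ) (n k j : ℕ) : ℝ := v (.inl (n, k, j))

def coarseVal (v : SchemeIndex → ℝ) (n j : ℕ) : ℝ := v (.inr (.inl (n, j)))

def fineGhost (v : SchemeIndex → ℝ) (n k : ℕ) : ℝ := v (.inr (.inr (.inl (n, k))))

def coarseGhost (v : SchemeIndex → ℝ) (n : ℕ) : ℝ := v (.inr (.inr (.inr n)))

def schemeBox : Finset SchemeIndex :=
  (Icc 1 N2 ×ˢ Icc 1 K ×ˢ Icc 1 I).disjSum
    ((Icc 1 N2 ×ˢ Icc (I + 1) J).disjSum ((Icc 1 N2 ×ˢ Icc 1 K).disjSum (Icc 1 N2)))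

noncomputable def schemeResidual (p0 : ℕ → ℝ) (f1 : ℕ → ℕ → ℕ → ℝ) (f2 : ℕ → ℕ → ℝ)
    (v : SchemeIndex → ℝ) : SchemeIndex → ℝ
  | .inl (n, k, j) =>
    (hw xh j / δt1) * (fineVal v n k j - prevF K p0 (fineVal v) n k j)
      - (uF I xh (fineVal v) (fineGhost v) n k j - uF I xh (fineVal v) (fineGhost v) n k (j - 1))
      - hw xh j * f1 n k j
  | .inr (.inl (n, j)) =>
    (hw xh j / δt2) * (coarseVal v n j - prevC p0 (coarseVal v) n j)
      - (uC I J xh (coarseVal v) (coarseGhost v) n j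
          - uC I J xh (coarseVal v) (coarseGhost v) n (j - 1))
      - hw xh j * f2 n j
  | .inr (.inr (.inl (n, k))) =>
    uF I xh (fineVal v) (fineGhost v) n k I - uC I J xh (coarseVal v) (coarseGhost v) n I
  | .inr (.inr (.inr n)) => δt2 * coarseGhost v n - ∑ k ∈ Icc 1 K, δt1 * fineVal v n k I

lemma schemeResidual_sub (p0 p0' : ℕ → ℝ) (f1 f1' : ℕ → ℕ → ℕ → ℝ) (f2 f2' : ℕ → ℕ → ℝ)
    (v v' : SchemeIndex → ℝ) :
    schemeResidual J I K δt1 δt2 xh p0 f1 f2 v - schemeResidual J I K δt1 δt2 xh p0' f1' f2' v'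
      = schemeResidual J I K δt1 δt2 xh (p0 - p0') (f1 - f1') (f2 - f2') (v - v') := by
  funext x
  rcases x with ⟨n, k, j⟩ | ⟨n, j⟩ | ⟨n, k⟩ | n <;>
    simp only [schemeResidual, fineVal, coarseVal, fineGhost, coarseGhost, uF, uC, prevF, prevC,
      Pi.sub_apply, mul_sub, sum_sub_distrib] <;>
    (try split_ifs) <;> ring

noncomputable def schemeOperator : (SchemeIndex → ℝ) →ₗ[ℝ] SchemeIndex → ℝ where
  toFun := schemeResidual J I K δt1 δt2 xh 0 0 0
  map_add' v w := by
    rw [← sub_eq_iff_eq_add, schemeResidual_sub]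
    simp
  map_smul' c v := by
    funext x
    rcases x with ⟨n, k, j⟩ | ⟨n, j⟩ | ⟨n, k⟩ | n <;>
      simp only [schemeResidual, fineVal, coarseVal, fineGhost, coarseGhost, uF, uC, prevF,
        prevC, Pi.smul_apply, smul_eq_mul, RingHom.id_apply, Pi.zero_apply] <;>
      (try split_ifs) <;> (try rw [mul_sub, mul_sum]) <;> ring_nf

end Residual

section Solvability

variable {J I K N2 : ℕ} {δt1 δt2 : ℝ} {xh : ℕ → ℝ} {p0 : ℕ → ℝ} {f1 : ℕ → ℕ → ℕ → ℝ}
  {f2 : ℕ → ℕ → ℝ}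

lemma schemeResidual_eq_zero_on_box_iff (v : SchemeIndex → ℝ) :
    (∀ x ∈ schemeBox J I K N2, schemeResidual J I K δt1 δt2 xh p0 f1 f2 v x = 0)
      ↔ SchemeEqs J I K N2 δt1 δt2 xh p0 f1 f2 (fineVal v) (coarseVal v) (fineGhost v)
          (coarseGhost v)
        ∧ InterfaceFineFluxOverlap J I K N2 δt1 δt2 xh (fineVal v) (coarseVal v)
          (fineGhost v) (coarseGhost v) := by
  simp only [schemeBox, Sum.forall, inl_mem_disjSum, inr_mem_disjSum, mem_product, Prod.forall,
    schemeResidual, SchemeEqs, InterfaceFineFluxOverlap, sub_eq_zero, and_imp, imp_and,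
    forall_and, and_assoc]
  aesop


lemma eq_zero_on_box_of_schemeOperator (hxh : ∀ j < J, xh j < xh (j + 1)) (hI : 0 < I)
    (hIJ : I < J) (hK : 0 < K) (hδt1 : 0 < δt1) (hδt2 : 0 < δt2) {v : SchemeIndex → ℝ}
    (hv : ∀ x ∈ schemeBox J I K N2, schemeOperator J I K δt1 δt2 xh v x = 0) :
    ∀ x ∈ schemeBox J I K N2, v x = 0 := by
  obtain ⟨hS, hIF⟩ := (schemeResidual_eq_zero_on_box_iff v).mp hv
  have h0 := eq_zero_of_homogeneous hxh hI hIJ hK hδt1 hδt2 hS hIF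
  rintro (⟨n, k, j⟩ | ⟨n, j⟩ | ⟨n, k⟩ | n) hx <;>
    simp only [schemeBox, inl_mem_disjSum, inr_mem_disjSum, mem_product] at hx
  · exact ((h0 n hx.1).1 k hx.2.1).1 j hx.2.2
  · exact (h0 n hx.1).2.1 j hx.2
  · exact ((h0 n hx.1).1 k hx.2).2
  · exact (h0 n hx).2.2

lemma eq_on_box_of_schemeResidual (hxh : ∀ j < J, xh j < xh (j + 1)) (hI : 0 < I)
    (hIJ : I < J) (hK : 0 < K) (hδt1 : 0 < δt1) (hδt2 : 0 < δt2) {v v' : SchemeIndex → ℝ}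
    (hv : ∀ x ∈ schemeBox J I K N2, schemeResidual J I K δt1 δt2 xh p0 f1 f2 v x = 0)
    (hv' : ∀ x ∈ schemeBox J I K N2, schemeResidual J I K δt1 δt2 xh p0 f1 f2 v' x = 0) :
    ∀ x ∈ schemeBox J I K N2, v x = v' x := by
  have hdiff : schemeOperator J I K δt1 δt2 xh (v - v')
      = schemeResidual J I K δt1 δt2 xh p0 f1 f2 v
        - schemeResidual J I K δt1 δt2 xh p0 f1 f2 v' := by
    rw [schemeResidual_sub, sub_self, sub_self, sub_self]
    rfl
  intro x hx
  refine sub_eq_zero.mp (eq_zero_on_box_of_schemeOperator hxh hI hIJ hK hδt1 hδt2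
    (v := v - v') (fun y hy => ?_) x hx)
  rw [hdiff, Pi.sub_apply, hv y hy, hv' y hy, sub_zero]

lemma exists_schemeResidual_eq_zero (hxh : ∀ j < J, xh j < xh (j + 1)) (hI : 0 < I)
    (hIJ : I < J) (hK : 0 < K) (hδt1 : 0 < δt1) (hδt2 : 0 < δt2) :
    ∃ v : SchemeIndex → ℝ,
      ∀ x ∈ schemeBox J I K N2, schemeResidual J I K δt1 δt2 xh p0 f1 f2 v x = 0 := by
  set box := schemeBox J I K N2
  let extend := Function.ExtendByZero.linearMap ℝ ((↑) : box → SchemeIndex)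
  have extend_apply (w : box → ℝ) (x : box) : extend w x = w x :=
    Subtype.val_injective.extend_apply _ _ _
  let T := LinearMap.funLeft ℝ ℝ ((↑) : box → SchemeIndex) ∘ₗ
    schemeOperator J I K δt1 δt2 xh ∘ₗ extend
  have hT : Function.Injective T := by
    refine (injective_iff_map_eq_zero T).mpr fun w hw => funext fun x => ?_
    rw [← extend_apply w x]
    exact eq_zero_on_box_of_schemeOperator hxh hI hIJ hK hδt1 hδt2
      (fun y hy => congrFun hw ⟨y, hy⟩) x x.2
  obtain ⟨w, hw⟩ := LinearMap.injective_iff_surjective.mp hT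
    fun x => -schemeResidual J I K δt1 δt2 xh p0 f1 f2 0 x
  refine ⟨extend w, fun x hx => ?_⟩
  have hsplit := congrFun (schemeResidual_sub J I K δt1 δt2 xh p0 p0 f1 f1 f2 f2 (extend w) 0) x
  have hwx := congrFun hw ⟨x, hx⟩
  simp only [sub_zero, sub_self, Pi.sub_apply] at hsplit
  simp only [T, LinearMap.coe_comp, Function.comp_apply, LinearMap.funLeft_apply] at hwx
  change schemeResidual J I K δt1 δt2 xh 0 0 0 (extend w) x = _ at hwx
  linarith

end Solvability

theorem wellposed_overlap_fine_flux_general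
    (J I K N2 : ℕ) (hI1 : 1 ≤ I) (hIJ : I < J) (hK : 1 ≤ K)
    (δt1 : ℝ) (hδt1 : 0 < δt1) (δt2 : ℝ) (hδt2 : δt2 = (K : ℝ) * δt1)
    (xh : ℕ → ℝ) (hxmono : ∀ j < J, xh j < xh (j + 1))
    (p0 : ℕ → ℝ) (f1 : ℕ → ℕ → ℕ → ℝ) (f2 : ℕ → ℕ → ℝ) :
    (∃ p1 p2 r1 r2,
        SchemeEqs J I K N2 δt1 δt2 xh p0 f1 f2 p1 p2 r1 r2
        ∧ InterfaceFineFluxOverlap J I K N2 δt1 δt2 xh p1 p2 r1 r2)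
    ∧ ∀ p1 p2 r1 r2 p1' p2' r1' r2',
        SchemeEqs J I K N2 δt1 δt2 xh p0 f1 f2 p1 p2 r1 r2 →
        InterfaceFineFluxOverlap J I K N2 δt1 δt2 xh p1 p2 r1 r2 →
        SchemeEqs J I K N2 δt1 δt2 xh p0 f1 f2 p1' p2' r1' r2' →
        InterfaceFineFluxOverlap J I K N2 δt1 δt2 xh p1' p2' r1' r2' →
        ∀ n ∈ Icc 1 N2,
          (∀ k ∈ Icc 1 K, (∀ j ∈ Icc 1 I, p1 n k j = p1' n k j) ∧ r1 n k = r1' n k)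
          ∧ (∀ j ∈ Icc (I + 1) J, p2 n j = p2' n j) ∧ r2 n = r2' n := by
  have hδt2' : 0 < δt2 := hδt2 ▸ mul_pos (Nat.cast_pos.mpr hK) hδt1
  refine ⟨?_, fun p1 p2 r1 r2 p1' p2' r1' r2' hS hIF hS' hIF' n hn => ?_⟩
  · obtain ⟨v, hv⟩ := exists_schemeResidual_eq_zero (N2 := N2) (p0 := p0) (f1 := f1) (f2 := f2)
      hxmono hI1 hIJ hK hδt1 hδt2'
    exact ⟨_, _, _, _, (schemeResidual_eq_zero_on_box_iff v).mp hv⟩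
  · have heq := eq_on_box_of_schemeResidual hxmono hI1 hIJ hK hδt1 hδt2'
      ((schemeResidual_eq_zero_on_box_iff (packUnknowns p1 p2 r1 r2)).mpr ⟨hS, hIF⟩)
      ((schemeResidual_eq_zero_on_box_iff (packUnknowns p1' p2' r1' r2')).mpr ⟨hS', hIF'⟩)
    refine ⟨fun k hk => ⟨fun j hj => heq (.inl (n, k, j)) ?_, heq (.inr (.inr (.inl (n, k)))) ?_⟩,
      fun j hj => heq (.inr (.inl (n, j))) ?_, heq (.inr (.inr (.inr n))) ?_⟩ <;>
      simp only [schemeBox, inl_mem_disjSum, inr_mem_disjSum, mem_product] <;> tauto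

/-- Well-posedness of the overlapping scheme with fine-flux/coarse-pressure matching:
for every choice of sources and initial values, the resulting finite linear system has
exactly one solution `(p_j^{n,k}` for `j ≤ I`, `p_j^{n}` for `j > I`, `p_{I+1}^{n,k}`,
`p_I^{n})`. -/
theorem wellposed_overlap_fine_flux
    (J I K N2 : ℕ) (hJ : 3 ≤ J) (hI1 : 1 ≤ I) (hIJ : I < J) (hK : 1 ≤ K) (hN2 : 1 ≤ N2)
    (δt1 : ℝ) (hδt1 : 0 < δt1) (δt2 : ℝ) (hδt2 : δt2 = (K : ℝ) * δt1)
    (xh : ℕ → ℝ) (hx0 : xh 0 = 0) (hxmono : ∀ j < J, xh j < xh (j + 1))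
    (p0 : ℕ → ℝ) (f1 : ℕ → ℕ → ℕ → ℝ) (f2 : ℕ → ℕ → ℝ) :
    (∃ p1 p2 r1 r2,
        SchemeEqs J I K N2 δt1 δt2 xh p0 f1 f2 p1 p2 r1 r2
        ∧ InterfaceFineFluxOverlap J I K N2 δt1 δt2 xh p1 p2 r1 r2)
    ∧ ∀ p1 p2 r1 r2 p1' p2' r1' r2',
        SchemeEqs J I K N2 δt1 δt2 xh p0 f1 f2 p1 p2 r1 r2 →
        InterfaceFineFluxOverlap J I K N2 δt1 δt2 xh p1 p2 r1 r2 →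
        SchemeEqs J I K N2 δt1 δt2 xh p0 f1 f2 p1' p2' r1' r2' →
        InterfaceFineFluxOverlap J I K N2 δt1 δt2 xh p1' p2' r1' r2' →
        ∀ n ∈ Icc 1 N2,
          (∀ k ∈ Icc 1 K, (∀ j ∈ Icc 1 I, p1 n k j = p1' n k j) ∧ r1 n k = r1' n k)
          ∧ (∀ j ∈ Icc (I + 1) J, p2 n j = p2' n j) ∧ r2 n = r2' n :=
  wellposed_overlap_fine_flux_general J I K N2 hI1 hIJ hK δt1 hδt1 δt2 hδt2 xh hxmono p0 f1 f2
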